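/- arXiv:2510.25030 — 4 statements merged into one kernel-verified Lean document; each statement's English description precedes it below -/
import Mathlib

section
/- Let n ≥ 1 and let T_n ⊆ ℝ^{n(n−1)/2} be the set of vectors q = (q_{ij})_{1≤i<j≤n} such that: q_{ij} ≥ 0 for all i < j; q_{ij} ≤ q_{ik} + q_{jk} for all distinct i, j, k (with q indexed by unordered pairs); and for all distinct i, j, k, l, the maximum among the three sums q_{ij}+q_{kl}, q_{ik}+q_{jl}, q_{il}+q_{jk} is attained at least twice. Then the convex hull of T_n equals the cut cone Cut_n, i.e., the set of all nonnegative linear combinations of the cut vectors δ(S) for S ⊆ {1,…,n}. -/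
/-!
A tree metric is a nonnegative combination of cuts, by induction on the number of points.
For a point `x`, let `2t` be the least value of `d x a + d x b - d a b` over the other points
`a, b` (the length of the pendant edge at `x`). Subtracting `t • δ({x})` keeps `d` a tree metric
and puts `x` between some `a` and `b`. If `x` then sits at `b`, it is merged with `b`. Otherwise
the four-point condition makes `x` separate `A = {k | d k b = d k x + d x b}` (containing `x` and
`a`) from its complement `B`: `d k l = d k x + d x l` for `k ∈ A`, `l ∈ B`, so decompositions on
`A` and on `B ∪ {x}` glue along `x`. Conversely, tree metrics contain the cuts and are closed
under nonnegative scaling, so their convex hull is the cone generated by the cuts.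
-/

/-- The cut vector of a subset S of {1, ..., n}. -/
def cutVec {n : ℕ} (S : Finset (Fin n)) : Fin n → Fin n → ℝ :=
  fun i j => if (i ∈ S) ↔ (j ∈ S) then 0 else 1

/-- The set T_n of tree metrics on n points, encoded as symmetric functions with zero
diagonal: entries are nonnegative, satisfy the triangle inequality, and the four-point
condition (the maximum of the three pairings is attained at least twice). -/
def treeMetricSet (n : ℕ) : Set (Fin n → Fin n → ℝ) :=
  {q | (∀ i j, q i j = q j i) ∧ (∀ i, q i i = 0) ∧
    (∀ i j, i ≠ j → 0 ≤ q i j) ∧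
    (∀ i j k : Fin n, i ≠ j → i ≠ k → j ≠ k → q i j ≤ q i k + q j k) ∧
    (∀ i j k l : Fin n, i ≠ j → i ≠ k → i ≠ l → j ≠ k → j ≠ l → k ≠ l →
      (q i j + q k l = q i k + q j l ∧ q i l + q j k ≤ q i j + q k l) ∨
      (q i j + q k l = q i l + q j k ∧ q i k + q j l ≤ q i j + q k l) ∨
      (q i k + q j l = q i l + q j k ∧ q i j + q k l ≤ q i k + q j l))}

open Finset
open scoped Pointwise

lemma smul_mem_convexHull_of_smul_mem {𝕜 E : Type*} [Field 𝕜] [PartialOrder 𝕜] [AddCommGroup E]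
    [Module 𝕜 E] {s : Set E} (hs : ∀ c : 𝕜, 0 ≤ c → ∀ x ∈ s, c • x ∈ s)
    {c : 𝕜} (hc : 0 ≤ c) {x : E} (hx : x ∈ convexHull 𝕜 s) : c • x ∈ convexHull 𝕜 s := by
  have hcs : c • convexHull 𝕜 s ⊆ convexHull 𝕜 s := by
    rw [← convexHull_smul]
    exact convexHull_mono (Set.smul_set_subset_iff.mpr fun y hy => hs c hc y hy)
  exact hcs (Set.smul_mem_smul_set hx)

lemma PointedCone.coe_hull_eq_convexHull {𝕜 E : Type*} [Field 𝕜] [LinearOrder 𝕜]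
    [IsStrictOrderedRing 𝕜] [AddCommGroup E] [Module 𝕜 E] {s : Set E} (hne : s.Nonempty)
    (hs : ∀ c : 𝕜, 0 ≤ c → ∀ x ∈ s, c • x ∈ s) :
    (PointedCone.hull 𝕜 s : Set E) = convexHull 𝕜 s := by
  refine subset_antisymm (fun x hx => ?_)
    (convexHull_min PointedCone.subset_hull (PointedCone.convex _))
  induction hx using Submodule.span_induction with
  | mem x hx => exact subset_convexHull 𝕜 s hx
  | zero =>
    obtain ⟨y, hy⟩ := hne
    exact subset_convexHull 𝕜 s (zero_smul 𝕜 y ▸ hs 0 le_rfl y hy)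
  | add x y _ _ hx hy =>
    have h2 : ∀ z ∈ convexHull 𝕜 s, (2 : 𝕜) • z ∈ convexHull 𝕜 s :=
      fun z hz => smul_mem_convexHull_of_smul_mem hs zero_le_two hz
    have := convex_convexHull 𝕜 s (h2 x hx) (h2 y hy) (by norm_num : (0 : 𝕜) ≤ 1 / 2)
      (by norm_num : (0 : 𝕜) ≤ 1 / 2) (by norm_num)
    rwa [smul_smul, smul_smul, one_div, inv_mul_cancel₀ two_ne_zero, one_smul, one_smul] at this
  | smul c x _ hx => exact smul_mem_convexHull_of_smul_mem hs c.2 hx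

variable {n : ℕ}

def MaxAttainedTwice (a b c : ℝ) : Prop :=
  (a = b ∧ c ≤ a) ∨ (a = c ∧ b ≤ a) ∨ (b = c ∧ a ≤ b)

lemma MaxAttainedTwice.sub_const {a b c : ℝ} (h : MaxAttainedTwice a b c) (s : ℝ) :
    MaxAttainedTwice (a - s) (b - s) (c - s) := by
  simpa only [MaxAttainedTwice, sub_left_inj, sub_le_sub_iff_right] using h

lemma MaxAttainedTwice.const_mul {a b c : ℝ} (h : MaxAttainedTwice a b c) {r : ℝ} (hr : 0 ≤ r) :
    MaxAttainedTwice (r * a) (r * b) (r * c) := by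
  rcases h with ⟨hab, hca⟩ | ⟨hac, hba⟩ | ⟨hbc, hab⟩
  · exact Or.inl ⟨by rw [hab], mul_le_mul_of_nonneg_left hca hr⟩
  · exact Or.inr (Or.inl ⟨by rw [hac], mul_le_mul_of_nonneg_left hba hr⟩)
  · exact Or.inr (Or.inr ⟨by rw [hbc], mul_le_mul_of_nonneg_left hab hr⟩)

lemma cutVec_singleton_of_ne {x i j : Fin n} (hij : i ≠ j) :
    cutVec {x} i j = (if i = x then 1 else 0) + (if j = x then 1 else 0) := by
  by_cases hix : i = x <;> by_cases hjx : j = x <;> simp_all [cutVec]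

structure IsTreeMetricOn (V : Finset (Fin n)) (d : Fin n → Fin n → ℝ) : Prop where
  symm : ∀ i ∈ V, ∀ j ∈ V, d i j = d j i
  self_eq_zero : ∀ i ∈ V, d i i = 0
  nonneg : ∀ i ∈ V, ∀ j ∈ V, i ≠ j → 0 ≤ d i j
  triangle : ∀ i ∈ V, ∀ j ∈ V, ∀ k ∈ V, i ≠ j → i ≠ k → j ≠ k → d i j ≤ d i k + d j k
  fourPoint : ∀ i ∈ V, ∀ j ∈ V, ∀ k ∈ V, ∀ l ∈ V,
    i ≠ j → i ≠ k → i ≠ l → j ≠ k → j ≠ l → k ≠ l →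
    MaxAttainedTwice (d i j + d k l) (d i k + d j l) (d i l + d j k)

lemma mem_treeMetricSet_iff {q : Fin n → Fin n → ℝ} :
    q ∈ treeMetricSet n ↔ IsTreeMetricOn univ q := by
  constructor
  · rintro ⟨hsymm, hself, hnonneg, htri, hfour⟩
    exact ⟨fun i _ j _ => hsymm i j, fun i _ => hself i, fun i _ j _ => hnonneg i j,
      fun i _ j _ k _ => htri i j k, fun i _ j _ k _ l _ => hfour i j k l⟩
  · rintro ⟨hsymm, hself, hnonneg, htri, hfour⟩
    exact ⟨fun i j => hsymm i (mem_univ i) j (mem_univ j), fun i => hself i (mem_univ i),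
      fun i j => hnonneg i (mem_univ i) j (mem_univ j),
      fun i j k => htri i (mem_univ i) j (mem_univ j) k (mem_univ k),
      fun i j k l => hfour i (mem_univ i) j (mem_univ j) k (mem_univ k) l (mem_univ l)⟩

lemma isTreeMetricOn_cutVec (V : Finset (Fin n)) (S : Finset (Fin n)) :
    IsTreeMetricOn V (cutVec S) where
  symm i _ j _ := by unfold cutVec; simp only [iff_comm]
  self_eq_zero i _ := by simp [cutVec]
  nonneg i _ j _ _ := by unfold cutVec; split <;> norm_num
  triangle i _ j _ k _ _ _ _ := by
    by_cases hi : i ∈ S <;> by_cases hj : j ∈ S <;> by_cases hk : k ∈ S <;>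
      simp [cutVec, hi, hj, hk]
  fourPoint i _ j _ k _ l _ _ _ _ _ _ _ := by
    by_cases hi : i ∈ S <;> by_cases hj : j ∈ S <;> by_cases hk : k ∈ S <;>
      by_cases hl : l ∈ S <;> norm_num [cutVec, MaxAttainedTwice, hi, hj, hk, hl]

namespace IsTreeMetricOn

variable {V W : Finset (Fin n)} {d : Fin n → Fin n → ℝ}

lemma smul (hd : IsTreeMetricOn V d) {c : ℝ} (hc : 0 ≤ c) : IsTreeMetricOn V (c • d) where
  symm i hi j hj := by simp only [Pi.smul_apply, hd.symm i hi j hj]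
  self_eq_zero i hi := by simp only [Pi.smul_apply, hd.self_eq_zero i hi, smul_zero]
  nonneg i hi j hj hij := mul_nonneg hc (hd.nonneg i hi j hj hij)
  triangle i hi j hj k hk hij hik hjk := by
    simp only [Pi.smul_apply, smul_eq_mul, ← mul_add]
    exact mul_le_mul_of_nonneg_left (hd.triangle i hi j hj k hk hij hik hjk) hc
  fourPoint i hi j hj k hk l hl hij hik hil hjk hjl hkl := by
    simp only [Pi.smul_apply, smul_eq_mul, ← mul_add]
    exact (hd.fourPoint i hi j hj k hk l hl hij hik hil hjk hjl hkl).const_mul hc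

lemma mono (hd : IsTreeMetricOn V d) (hWV : W ⊆ V) : IsTreeMetricOn W d where
  symm i hi j hj := hd.symm i (hWV hi) j (hWV hj)
  self_eq_zero i hi := hd.self_eq_zero i (hWV hi)
  nonneg i hi j hj := hd.nonneg i (hWV hi) j (hWV hj)
  triangle i hi j hj k hk := hd.triangle i (hWV hi) j (hWV hj) k (hWV hk)
  fourPoint i hi j hj k hk l hl := hd.fourPoint i (hWV hi) j (hWV hj) k (hWV hk) l (hWV hl)

lemma le_add (hd : IsTreeMetricOn V d) {i j k : Fin n} (hi : i ∈ V) (hj : j ∈ V) (hk : k ∈ V) :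
    d i j ≤ d i k + d k j := by
  rcases eq_or_ne i j with rfl | hij
  · rw [hd.self_eq_zero i hi, hd.symm k hk i hi]
    rcases eq_or_ne i k with rfl | hik
    · rw [hd.self_eq_zero i hi, add_zero]
    · linarith [hd.nonneg i hi k hk hik]
  rcases eq_or_ne i k with rfl | hik
  · rw [hd.self_eq_zero i hi, zero_add]
  rcases eq_or_ne j k with rfl | hjk
  · rw [hd.self_eq_zero j hj, add_zero]
  rw [hd.symm k hk j hj]
  exact hd.triangle i hi j hj k hk hij hik hjk

lemma sub_smul_cutVec_singleton (hd : IsTreeMetricOn V d) {x : Fin n} {t : ℝ}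
    (ht : ∀ a ∈ V.erase x, ∀ b ∈ V.erase x, 2 * t ≤ d x a + d x b - d a b) :
    IsTreeMetricOn V (d - t • cutVec {x}) where
  symm i hi j hj := by
    simp only [Pi.sub_apply, Pi.smul_apply, hd.symm i hi j hj,
      (isTreeMetricOn_cutVec V {x}).symm i hi j hj]
  self_eq_zero i hi := by
    simp only [Pi.sub_apply, Pi.smul_apply, hd.self_eq_zero i hi,
      (isTreeMetricOn_cutVec V {x}).self_eq_zero i hi, smul_zero, sub_zero]
  nonneg i hi j hj hij := by
    have hle : ∀ a ∈ V.erase x, t ≤ d x a := fun a ha => by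
      have := ht a ha a ha
      rw [hd.self_eq_zero a (mem_of_mem_erase ha)] at this
      linarith
    simp only [Pi.sub_apply, Pi.smul_apply, smul_eq_mul, cutVec_singleton_of_ne hij]
    by_cases hix : i = x
    · subst hix
      simp only [↓reduceIte, hij.symm, add_zero, mul_one, sub_nonneg]
      linarith [hle j (mem_erase.2 ⟨hij.symm, hj⟩)]
    by_cases hjx : j = x
    · subst hjx
      simp only [hix, ↓reduceIte, zero_add, mul_one, sub_nonneg]
      linarith [hle i (mem_erase.2 ⟨hix, hi⟩), hd.symm i hi j hj]
    simp only [hix, hjx, ↓reduceIte, add_zero, mul_zero, sub_zero, hd.nonneg i hi j hj hij]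
  triangle i hi j hj k hk hij hik hjk := by
    simp only [Pi.sub_apply, Pi.smul_apply, smul_eq_mul, cutVec_singleton_of_ne hij,
      cutVec_singleton_of_ne hik, cutVec_singleton_of_ne hjk]
    have := hd.triangle i hi j hj k hk hij hik hjk
    by_cases hkx : k = x
    · subst hkx
      have := ht i (mem_erase.2 ⟨hik, hi⟩) j (mem_erase.2 ⟨hjk, hj⟩)
      simp only [hik, hjk, ↓reduceIte, add_zero, mul_zero, sub_zero, zero_add, mul_one]
      linarith [hd.symm i hi k hk, hd.symm j hj k hk]
    simp only [hkx, if_false, add_zero]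
    linarith
  fourPoint i hi j hj k hk l hl hij hik hil hjk hjl hkl := by
    simp only [Pi.sub_apply, Pi.smul_apply, smul_eq_mul, cutVec_singleton_of_ne hij,
      cutVec_singleton_of_ne hik, cutVec_singleton_of_ne hil, cutVec_singleton_of_ne hjk,
      cutVec_singleton_of_ne hjl, cutVec_singleton_of_ne hkl]
    convert (hd.fourPoint i hi j hj k hk l hl hij hik hil hjk hjl hkl).sub_const
      (t * ((if i = x then 1 else 0) + (if j = x then 1 else 0) + (if k = x then 1 else 0) +
        (if l = x then 1 else 0))) using 1 <;> ring

lemma eq_of_eq_zero (hd : IsTreeMetricOn V d) {x y : Fin n} (hx : x ∈ V) (hy : y ∈ V)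
    (hxy : d x y = 0) {k : Fin n} (hk : k ∈ V) : d x k = d y k := by
  have h₁ := hd.le_add hx hk hy
  have h₂ := hd.le_add hy hk hx
  rw [hd.symm y hy x hx] at h₂
  linarith

lemma eq_add_of_mem_filter (hd : IsTreeMetricOn V d) {x b : Fin n} (hx : x ∈ V) (hb : b ∈ V)
    (hxb : d x b ≠ 0) {k l : Fin n} (hk : k ∈ V.filter fun k => d k b = d k x + d x b)
    (hl : l ∈ V \ V.filter fun k => d k b = d k x + d x b) : d k l = d k x + d x l := by
  obtain ⟨hkV, hkb⟩ := mem_filter.1 hk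
  obtain ⟨hlV, hlA⟩ := mem_sdiff.1 hl
  have hlb : d l b < d l x + d x b :=
    (hd.le_add hlV hb hx).lt_of_ne fun h => hlA (mem_filter.2 ⟨hlV, h⟩)
  have hxx := hd.self_eq_zero x hx
  rcases eq_or_ne k x with rfl | hkx
  · rw [hxx, zero_add]
  rcases eq_or_ne l b with rfl | hlb_ne
  · exact hkb
  have hxb_ne : x ≠ b := by rintro rfl; exact hxb hxx
  have hkb_ne : k ≠ b := by
    rintro rfl
    rw [hd.self_eq_zero k hkV, hd.symm k hkV x hx] at hkb
    exact hxb (by linarith)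
  have hlx : l ≠ x := by rintro rfl; exact hlA (mem_filter.2 ⟨hlV, by rw [hxx, zero_add]⟩)
  have hkl : k ≠ l := by rintro rfl; exact hlA hk
  have hlx' := hd.symm l hlV x hx
  -- In the four-point condition for `k, l, x, b`, the pairing `{k b}{l x}` strictly beats
  -- `{k x}{l b}`, so it must tie with `{k l}{x b}`.
  rcases hd.fourPoint k hkV l hlV x hx b hb hkl hkx hkb_ne hlx hlb_ne hxb_ne with
    ⟨h, h'⟩ | ⟨h, h'⟩ | ⟨h, h'⟩ <;> linarith

end IsTreeMetricOn

def cutCone (n : ℕ) : PointedCone ℝ (Fin n → Fin n → ℝ) :=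
  PointedCone.hull ℝ (Set.range cutVec)

lemma mem_cutCone_iff {w : Fin n → Fin n → ℝ} :
    w ∈ cutCone n ↔ ∃ lam : Finset (Fin n) → ℝ, (∀ S, 0 ≤ lam S) ∧
      w = ∑ S : Finset (Fin n), lam S • cutVec S := by
  rw [cutCone, Submodule.mem_span_range_iff_exists_fun]
  constructor
  · rintro ⟨c, rfl⟩
    exact ⟨fun S => c S, fun S => (c S).2, rfl⟩
  · rintro ⟨lam, hlam, rfl⟩
    exact ⟨fun S => ⟨lam S, hlam S⟩, rfl⟩

lemma cutVec_comp (g : Fin n → Fin n) (S : Finset (Fin n)) (i j : Fin n) :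
    cutVec S (g i) (g j) = cutVec (univ.filter fun k => g k ∈ S) i j := by
  simp [cutVec]

lemma comp_mem_cutCone (g : Fin n → Fin n) {w : Fin n → Fin n → ℝ} (hw : w ∈ cutCone n) :
    (fun i j => w (g i) (g j)) ∈ cutCone n := by
  induction hw using Submodule.span_induction with
  | mem w hw =>
    obtain ⟨S, rfl⟩ := hw
    simp_rw [cutVec_comp]
    exact PointedCone.subset_hull ⟨_, rfl⟩
  | zero => exact zero_mem _
  | add w v _ _ hw hv => exact add_mem hw hv
  | smul c w _ hw => exact Submodule.smul_mem _ c hw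

def CutDecomposableOn (V : Finset (Fin n)) (d : Fin n → Fin n → ℝ) : Prop :=
  ∃ w ∈ cutCone n, ∀ i ∈ V, ∀ j ∈ V, d i j = w i j

namespace CutDecomposableOn

variable {V W : Finset (Fin n)} {d e : Fin n → Fin n → ℝ}

lemma of_mem_cutCone (hd : d ∈ cutCone n) : CutDecomposableOn V d :=
  ⟨d, hd, fun _ _ _ _ => rfl⟩

lemma congr (h : CutDecomposableOn V d) (hde : ∀ i ∈ V, ∀ j ∈ V, d i j = e i j) :
    CutDecomposableOn V e := by
  obtain ⟨w, hw, hdw⟩ := h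
  exact ⟨w, hw, fun i hi j hj => (hde i hi j hj).symm.trans (hdw i hi j hj)⟩

lemma add (hd : CutDecomposableOn V d) (he : CutDecomposableOn V e) :
    CutDecomposableOn V (d + e) := by
  obtain ⟨w, hw, hdw⟩ := hd
  obtain ⟨v, hv, hev⟩ := he
  exact ⟨w + v, add_mem hw hv, fun i hi j hj => by simp [hdw i hi j hj, hev i hi j hj]⟩

lemma comp (h : CutDecomposableOn W d) {g : Fin n → Fin n} (hg : ∀ i ∈ V, g i ∈ W) :
    CutDecomposableOn V (fun i j => d (g i) (g j)) := by
  obtain ⟨w, hw, hdw⟩ := h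
  exact ⟨_, comp_mem_cutCone g hw, fun i hi j hj => hdw _ (hg i hi) _ (hg j hj)⟩

lemma of_erase (hd : IsTreeMetricOn V d) {x y : Fin n} (hx : x ∈ V) (hy : y ∈ V.erase x)
    (hxy : d x y = 0) (h : CutDecomposableOn (V.erase x) d) : CutDecomposableOn V d := by
  have hyV := mem_of_mem_erase hy
  have hxk : ∀ k ∈ V, d x k = d y k := fun k hk => hd.eq_of_eq_zero hx hyV hxy hk
  refine (h.comp (g := fun i => if i = x then y else i) fun i hi => ?_).congr
    fun i hi j hj => ?_
  · split_ifs with hix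
    exacts [hy, mem_erase.2 ⟨hix, hi⟩]
  · split_ifs with hix hjx hjx
    · rw [hix, hjx, hd.self_eq_zero y hyV, hd.self_eq_zero x hx]
    · rw [hix, hxk j hj]
    · rw [hjx, hd.symm i hi y hyV, hd.symm i hi x hx, hxk i hi]
    · rfl

lemma of_cross (hd : IsTreeMetricOn V d) {A : Finset (Fin n)} {x : Fin n} (hAV : A ⊆ V)
    (hx : x ∈ A) (hcross : ∀ k ∈ A, ∀ l ∈ V \ A, d k l = d k x + d x l)
    (hA : CutDecomposableOn A d) (hB : CutDecomposableOn (insert x (V \ A)) d) :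
    CutDecomposableOn V d := by
  refine ((hA.comp (g := fun i => if i ∈ A then i else x) fun i _ => ?_).add
    (hB.comp (g := fun i => if i ∈ A then x else i) fun i hi => ?_)).congr
    fun i hi j hj => ?_
  · split_ifs with hiA
    exacts [hiA, hx]
  · split_ifs with hiA
    exacts [mem_insert_self x _, mem_insert_of_mem (mem_sdiff.2 ⟨hi, hiA⟩)]
  · have hxx := hd.self_eq_zero x (hAV hx)
    simp only [Pi.add_apply]
    by_cases hiA : i ∈ A <;> by_cases hjA : j ∈ A <;> simp only [hiA, hjA, if_true, if_false]
    · rw [hxx, add_zero]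
    · rw [hcross i hiA j (mem_sdiff.2 ⟨hj, hjA⟩)]
    · rw [hd.symm i hi j hj, hcross j hjA i (mem_sdiff.2 ⟨hi, hiA⟩), hd.symm j hj x (hAV hx),
        hd.symm x (hAV hx) i hi, add_comm]
    · rw [hxx, zero_add]

end CutDecomposableOn

namespace IsTreeMetricOn

variable {V : Finset (Fin n)} {d : Fin n → Fin n → ℝ}

lemma cutDecomposableOn_of_between (hd : IsTreeMetricOn V d) {x a b : Fin n} (hx : x ∈ V)
    (ha : a ∈ V.erase x) (hb : b ∈ V.erase x) (hxab : d a x + d x b = d a b)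
    (ih : ∀ W ⊂ V, IsTreeMetricOn W d → CutDecomposableOn W d) : CutDecomposableOn V d := by
  obtain ⟨hax, haV⟩ := mem_erase.1 ha
  have hbV := mem_of_mem_erase hb
  by_cases hxb : d x b = 0
  · exact .of_erase hd hx hb hxb (ih _ (erase_ssubset hx) (hd.mono (erase_subset x V)))
  set A := V.filter fun k => d k b = d k x + d x b
  have hAV : A ⊆ V := filter_subset _ V
  have hxA : x ∈ A := mem_filter.2 ⟨hx, by rw [hd.self_eq_zero x hx, zero_add]⟩
  have haA : a ∈ A := mem_filter.2 ⟨haV, hxab.symm⟩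
  have hbA : b ∉ A := by
    intro h
    have hb' := (mem_filter.1 h).2
    rw [hd.self_eq_zero b hbV, hd.symm b hbV x hx] at hb'
    exact hxb (by linarith)
  have hBV : insert x (V \ A) ⊆ V := insert_subset hx sdiff_subset
  have haB : a ∉ insert x (V \ A) := by
    simp only [mem_insert, mem_sdiff, haA, not_true_eq_false, and_false, or_false]
    exact hax
  exact .of_cross hd hAV hxA (fun k hk l hl => hd.eq_add_of_mem_filter hx hbV hxb hk hl)
    (ih A ((ssubset_iff_of_subset hAV).2 ⟨b, hbV, hbA⟩) (hd.mono hAV))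
    (ih _ ((ssubset_iff_of_subset hBV).2 ⟨a, haV, haB⟩) (hd.mono hBV))

lemma exists_sub_smul_cutVec_singleton_between (hd : IsTreeMetricOn V d) {x : Fin n}
    (hx : x ∈ V) (hV : (V.erase x).Nonempty) :
    ∃ t : ℝ, 0 ≤ t ∧ IsTreeMetricOn V (d - t • cutVec {x}) ∧ ∃ a ∈ V.erase x, ∃ b ∈ V.erase x,
      (d - t • cutVec {x}) a x + (d - t • cutVec {x}) x b = (d - t • cutVec {x}) a b := by
  obtain ⟨⟨a, b⟩, hab, hmin⟩ := exists_min_image (V.erase x ×ˢ V.erase x)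
    (fun p => d x p.1 + d x p.2 - d p.1 p.2) (hV.product hV)
  obtain ⟨ha, hb⟩ := mem_product.1 hab
  obtain ⟨hax, haV⟩ := mem_erase.1 ha
  obtain ⟨hbx, hbV⟩ := mem_erase.1 hb
  refine ⟨(d x a + d x b - d a b) / 2, ?_, ?_, a, ha, b, hb, ?_⟩
  · have := hd.le_add haV hbV hx
    rw [hd.symm a haV x hx] at this
    linarith
  · refine hd.sub_smul_cutVec_singleton fun a' ha' b' hb' => ?_
    have := hmin (a', b') (mem_product.2 ⟨ha', hb'⟩)
    dsimp only at this
    linarith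
  · have hcut : cutVec {x} a b = 0 := by simp [cutVec, hax, hbx]
    simp only [Pi.sub_apply, Pi.smul_apply, smul_eq_mul, cutVec_singleton_of_ne hax,
      cutVec_singleton_of_ne hbx.symm, hcut]
    simp only [hax, hbx, if_true, if_false, hd.symm a haV x hx]
    ring

theorem cutDecomposableOn (hd : IsTreeMetricOn V d) : CutDecomposableOn V d := by
  induction V using Finset.strongInduction generalizing d with
  | H V ih =>
  by_cases hV : ∃ x ∈ V, (V.erase x).Nonempty
  · obtain ⟨x, hx, hV⟩ := hV
    obtain ⟨t, ht, hpeel, a, ha, b, hb, hab⟩ := hd.exists_sub_smul_cutVec_singleton_between hx hV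
    have hcut : CutDecomposableOn V (t • cutVec {x}) :=
      .of_mem_cutCone (PointedCone.smul_mem _ ht (PointedCone.subset_hull ⟨{x}, rfl⟩))
    have hpeel_decomp := hpeel.cutDecomposableOn_of_between hx ha hb hab fun W hW => ih W hW
    simpa only [sub_add_cancel] using hpeel_decomp.add hcut
  · push Not at hV
    refine (CutDecomposableOn.of_mem_cutCone (zero_mem (cutCone n))).congr fun i hi j hj => ?_
    obtain rfl : i = j := by
      by_contra hij
      simpa [hV i hi] using mem_erase.2 ⟨Ne.symm hij, hj⟩
    exact (hd.self_eq_zero i hi).symm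

end IsTreeMetricOn

lemma cutVec_mem_treeMetricSet (S : Finset (Fin n)) : cutVec S ∈ treeMetricSet n :=
  mem_treeMetricSet_iff.2 (isTreeMetricOn_cutVec univ S)

lemma smul_mem_treeMetricSet {c : ℝ} (hc : 0 ≤ c) {q : Fin n → Fin n → ℝ}
    (hq : q ∈ treeMetricSet n) : c • q ∈ treeMetricSet n :=
  mem_treeMetricSet_iff.2 ((mem_treeMetricSet_iff.1 hq).smul hc)

lemma treeMetricSet_subset_cutCone : treeMetricSet n ⊆ cutCone n := by
  intro q hq
  obtain ⟨w, hw, hqw⟩ := (mem_treeMetricSet_iff.1 hq).cutDecomposableOn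
  rwa [show q = w from funext fun i => funext fun j => hqw i (mem_univ i) j (mem_univ j)]

lemma hull_treeMetricSet_eq_cutCone : PointedCone.hull ℝ (treeMetricSet n) = cutCone n :=
  le_antisymm (Submodule.span_le.2 treeMetricSet_subset_cutCone)
    (Submodule.span_mono (Set.range_subset_iff.2 cutVec_mem_treeMetricSet))

theorem convexHull_treeMetrics_eq_cutCone_general (n : ℕ) :
    convexHull ℝ (treeMetricSet n) =
      {w : Fin n → Fin n → ℝ | ∃ lam : Finset (Fin n) → ℝ,
        (∀ S, 0 ≤ lam S) ∧ w = ∑ S : Finset (Fin n), lam S • cutVec S} := by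
  rw [← PointedCone.coe_hull_eq_convexHull ⟨_, cutVec_mem_treeMetricSet ∅⟩
    fun c hc q hq => smul_mem_treeMetricSet hc hq, hull_treeMetricSet_eq_cutCone]
  ext w
  exact mem_cutCone_iff

theorem convexHull_treeMetrics_eq_cutCone (n : ℕ) (hn : 1 ≤ n) :
    convexHull ℝ (treeMetricSet n) =
      {w : Fin n → Fin n → ℝ | ∃ lam : Finset (Fin n) → ℝ,
        (∀ S, 0 ≤ lam S) ∧ w = ∑ S : Finset (Fin n), lam S • cutVec S} :=
  convexHull_treeMetrics_eq_cutCone_general n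
end

section
/- Let p > 0 and let a, b, c be nonnegative real numbers. Consider all 3×3 symmetric matrices (p_{ij}) with positive entries, diagonal entries equal to 1, satisfying p_{ij} ≤ 2^p·p_{ik}·p_{jk} for all distinct i, j, k and p_{ij}² ≥ 2^{−p} for all i < j. Then the supremum of p_{12}^{c−a−b}·p_{13}^{b−a−c}·p_{23}^{a−b−c} over all such matrices equals: 2^{ap} if a > b+c; 2^{bp} if b > a+c; 2^{cp} if c > a+b; and 2^{p(a+b+c)/2} otherwise. -/
/-!
Write the off-diagonal entries as `p₁₂ = 2^s`, `p₁₃ = 2^t`, `p₂₃ = 2^u`. The constraints become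
the polyhedron `-p ≤ 2s, 2t, 2u`, `s ≤ p + t + u`, `t ≤ p + s + u`, `u ≤ p + s + t`, and the
objective becomes `2^ℓ` for the linear form `ℓ = (c-a-b)s + (b-a-c)t + (a-b-c)u`. So the supremum
is `2^(max ℓ)`. The maximum is attained at a vertex: `(-p/2, -p/2, 0)` and its permutations when
one of `a, b, c` exceeds the sum of the other two, `(-p/2, -p/2, -p/2)` otherwise; in each case a
nonnegative combination of the constraints certifies it.
-/

open Real

namespace DeltaThreeTp

def IsNormalized (p : ℝ) (M : Matrix (Fin 3) (Fin 3) ℝ) : Prop :=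
  M.IsSymm ∧ (∀ i j, 0 < M i j) ∧ (∀ i, M i i = 1) ∧
    (∀ i j k : Fin 3, i ≠ j → i ≠ k → j ≠ k → M i j ≤ (2:ℝ) ^ p * (M i k * M j k)) ∧
    (∀ i j : Fin 3, i < j → (2:ℝ) ^ (-p) ≤ (M i j) ^ 2)

/-- `s, t, u` stand for the base-2 logarithms of `p₁₂, p₁₃, p₂₃`. -/
def LogFeasible (p s t u : ℝ) : Prop :=
  -p ≤ 2 * s ∧ -p ≤ 2 * t ∧ -p ≤ 2 * u ∧ s ≤ p + t + u ∧ t ≤ p + s + u ∧ u ≤ p + s + t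

noncomputable def optimalExponent (p a b c : ℝ) : ℝ :=
  if b + c < a then a * p
  else if a + c < b then b * p
  else if a + b < c then c * p
  else p * (a + b + c) / 2

theorem two_rpow_le_two_rpow_mul_iff {p s t u : ℝ} :
    (2:ℝ) ^ s ≤ 2 ^ p * (2 ^ t * 2 ^ u) ↔ s ≤ p + t + u := by
  rw [← rpow_add two_pos, ← rpow_add two_pos, rpow_le_rpow_left_iff one_lt_two, add_assoc]

theorem two_rpow_neg_le_sq_iff {p s : ℝ} : (2:ℝ) ^ (-p) ≤ ((2:ℝ) ^ s) ^ 2 ↔ -p ≤ 2 * s := by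
  rw [← rpow_natCast, ← rpow_mul zero_le_two, rpow_le_rpow_left_iff one_lt_two, mul_comm]
  norm_num

theorem isNormalized_two_rpow_iff {p s t u : ℝ} :
    IsNormalized p !![1, 2 ^ s, 2 ^ t; 2 ^ s, 1, 2 ^ u; 2 ^ t, 2 ^ u, 1] ↔ LogFeasible p s t u := by
  constructor
  · rintro ⟨-, -, -, htri, hlow⟩
    refine ⟨two_rpow_neg_le_sq_iff.1 (by simpa using hlow 0 1 (by decide)),
      two_rpow_neg_le_sq_iff.1 (by simpa using hlow 0 2 (by decide)),
      two_rpow_neg_le_sq_iff.1 (by simpa using hlow 1 2 (by decide)),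
      two_rpow_le_two_rpow_mul_iff.1 (by simpa using htri 0 1 2 (by decide) (by decide) (by decide)),
      two_rpow_le_two_rpow_mul_iff.1 (by simpa using htri 0 2 1 (by decide) (by decide) (by decide)),
      two_rpow_le_two_rpow_mul_iff.1 (by simpa using htri 1 2 0 (by decide) (by decide) (by decide))⟩
  · rintro ⟨hs, ht, hu, hstu, htsu, hust⟩
    refine ⟨?_, fun i j ↦ ?_, fun i ↦ ?_, fun i j k hij hik hjk ↦ ?_, fun i j hij ↦ ?_⟩
    · ext i j
      fin_cases i <;> fin_cases j <;> rfl
    · fin_cases i <;> fin_cases j <;> simp [rpow_pos_of_pos]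
    · fin_cases i <;> rfl
    · fin_cases i <;> fin_cases j <;> fin_cases k <;>
        simp [two_rpow_le_two_rpow_mul_iff] at hij hik hjk ⊢ <;> linarith
    · fin_cases i <;> fin_cases j <;> simp [two_rpow_neg_le_sq_iff] at hij ⊢ <;> assumption

theorem eq_two_rpow_logb_of_isNormalized {p : ℝ} {M : Matrix (Fin 3) (Fin 3) ℝ}
    (h : IsNormalized p M) :
    M = !![1, 2 ^ logb 2 (M 0 1), 2 ^ logb 2 (M 0 2); 2 ^ logb 2 (M 0 1), 1, 2 ^ logb 2 (M 1 2);
      2 ^ logb 2 (M 0 2), 2 ^ logb 2 (M 1 2), 1] := by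
  obtain ⟨hsymm, hpos, hdiag, -, -⟩ := h
  ext i j
  fin_cases i <;> fin_cases j <;>
    simp [rpow_logb, hpos, hdiag, hsymm.apply 0 1, hsymm.apply 0 2, hsymm.apply 1 2]

theorem isNormalized_iff {p : ℝ} {M : Matrix (Fin 3) (Fin 3) ℝ} :
    IsNormalized p M ↔ ∃ s t u, LogFeasible p s t u ∧
      M = !![1, 2 ^ s, 2 ^ t; 2 ^ s, 1, 2 ^ u; 2 ^ t, 2 ^ u, 1] := by
  constructor
  · intro h
    have hM := eq_two_rpow_logb_of_isNormalized h
    rw [hM, isNormalized_two_rpow_iff] at h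
    exact ⟨_, _, _, h, hM⟩
  · rintro ⟨s, t, u, h, rfl⟩
    exact isNormalized_two_rpow_iff.2 h

theorem setOf_isNormalized_eq_image (p α β γ : ℝ) :
    {r | ∃ M, IsNormalized p M ∧ r = M 0 1 ^ α * M 0 2 ^ β * M 1 2 ^ γ} =
      (fun e ↦ (2:ℝ) ^ e) '' {e | ∃ s t u, LogFeasible p s t u ∧ e = α * s + β * t + γ * u} := by
  have hobj (s t u : ℝ) :
      ((2:ℝ) ^ s) ^ α * ((2:ℝ) ^ t) ^ β * ((2:ℝ) ^ u) ^ γ = 2 ^ (α * s + β * t + γ * u) := by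
    simp only [← rpow_mul zero_le_two, rpow_add two_pos, mul_comm]
  ext r
  simp only [isNormalized_iff, Set.mem_image]
  constructor
  · rintro ⟨M, ⟨s, t, u, hstu, rfl⟩, rfl⟩
    exact ⟨_, ⟨s, t, u, hstu, rfl⟩, by simp [hobj]⟩
  · rintro ⟨e, ⟨s, t, u, hstu, rfl⟩, rfl⟩
    exact ⟨_, ⟨s, t, u, hstu, rfl⟩, by simp [hobj]⟩

variable {p a b c : ℝ}

theorem le_optimalExponent (ha : 0 ≤ a) (hb : 0 ≤ b) (hc : 0 ≤ c) {s t u : ℝ}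
    (h : LogFeasible p s t u) :
    (c - a - b) * s + (b - a - c) * t + (a - b - c) * u ≤ optimalExponent p a b c := by
  obtain ⟨hs, ht, hu, hstu, htsu, hust⟩ := h
  unfold optimalExponent
  split_ifs
  · linarith [mul_nonneg (by linarith : 0 ≤ a - b - c) (by linarith : 0 ≤ p + s + t - u),
      mul_nonneg hb (by linarith : 0 ≤ p + 2 * s), mul_nonneg hc (by linarith : 0 ≤ p + 2 * t)]
  · linarith [mul_nonneg (by linarith : 0 ≤ b - a - c) (by linarith : 0 ≤ p + s + u - t),
      mul_nonneg ha (by linarith : 0 ≤ p + 2 * s), mul_nonneg hc (by linarith : 0 ≤ p + 2 * u)]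
  · linarith [mul_nonneg (by linarith : 0 ≤ c - a - b) (by linarith : 0 ≤ p + t + u - s),
      mul_nonneg ha (by linarith : 0 ≤ p + 2 * t), mul_nonneg hb (by linarith : 0 ≤ p + 2 * u)]
  · linarith [mul_nonneg (by linarith : 0 ≤ a + b - c) (by linarith : 0 ≤ p + 2 * s),
      mul_nonneg (by linarith : 0 ≤ a + c - b) (by linarith : 0 ≤ p + 2 * t),
      mul_nonneg (by linarith : 0 ≤ b + c - a) (by linarith : 0 ≤ p + 2 * u)]

theorem exists_logFeasible_eq_optimalExponent (hp : 0 ≤ p) :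
    ∃ s t u, LogFeasible p s t u ∧
      optimalExponent p a b c = (c - a - b) * s + (b - a - c) * t + (a - b - c) * u := by
  unfold optimalExponent LogFeasible
  split_ifs
  · exact ⟨-(p / 2), -(p / 2), 0, by refine ⟨?_, ?_, ?_, ?_, ?_, ?_⟩ <;> linarith, by ring⟩
  · exact ⟨-(p / 2), 0, -(p / 2), by refine ⟨?_, ?_, ?_, ?_, ?_, ?_⟩ <;> linarith, by ring⟩
  · exact ⟨0, -(p / 2), -(p / 2), by refine ⟨?_, ?_, ?_, ?_, ?_, ?_⟩ <;> linarith, by ring⟩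
  · exact ⟨-(p / 2), -(p / 2), -(p / 2), by refine ⟨?_, ?_, ?_, ?_, ?_, ?_⟩ <;> linarith, by ring⟩

theorem isGreatest_optimalExponent (hp : 0 ≤ p) (ha : 0 ≤ a) (hb : 0 ≤ b) (hc : 0 ≤ c) :
    IsGreatest {e | ∃ s t u, LogFeasible p s t u ∧
      e = (c - a - b) * s + (b - a - c) * t + (a - b - c) * u} (optimalExponent p a b c) :=
  ⟨exists_logFeasible_eq_optimalExponent hp, by
    rintro e ⟨s, t, u, hstu, rfl⟩
    exact le_optimalExponent ha hb hc hstu⟩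

end DeltaThreeTp

open DeltaThreeTp in
theorem optimal_constants_T_p (p a b c : ℝ) (hp : 0 < p)
    (ha : 0 ≤ a) (hb : 0 ≤ b) (hc : 0 ≤ c) :
    IsLUB {r : ℝ | ∃ M : Matrix (Fin 3) (Fin 3) ℝ, M.IsSymm ∧
        (∀ i j, 0 < M i j) ∧ (∀ i, M i i = 1) ∧
        (∀ i j k : Fin 3, i ≠ j → i ≠ k → j ≠ k →
          M i j ≤ (2:ℝ) ^ p * (M i k * M j k)) ∧
        (∀ i j : Fin 3, i < j → (2:ℝ) ^ (-p) ≤ (M i j) ^ 2) ∧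
        r = M 0 1 ^ (c - a - b) * M 0 2 ^ (b - a - c) * M 1 2 ^ (a - b - c)}
      (if b + c < a then (2:ℝ) ^ (a * p)
       else if a + c < b then (2:ℝ) ^ (b * p)
       else if a + b < c then (2:ℝ) ^ (c * p)
       else (2:ℝ) ^ (p * (a + b + c) / 2)) := by
  have hlub := ((monotone_rpow_of_base_ge_one one_le_two).map_isGreatest
    (isGreatest_optimalExponent hp.le ha hb hc)).isLUB
  rw [← setOf_isNormalized_eq_image] at hlub
  simpa only [IsNormalized, and_assoc, optimalExponent, apply_ite (HPow.hPow (2:ℝ) : ℝ → ℝ)] using hlub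
end

section
/- Let M be an n×n real symmetric matrix. There exists an n×n real matrix B of rank at most 1 such that M = (B + Bᵀ)/2 if and only if M has rank at most 2 and every 2×2 principal minor of M is nonpositive, i.e., M_{ii}·M_{jj} ≤ M_{ij}² for all i, j. -/
open Matrix

private lemma rank_le_card_of_rows_mem {n : ℕ} {ι : Type} [Fintype ι]
    (M : Matrix (Fin n) (Fin n) ℝ) (w : ι → Fin n → ℝ)
    (h : ∀ i, M i ∈ Submodule.span ℝ (Set.range w)) :
    M.rank ≤ Fintype.card ι := by
  rw [Matrix.rank_eq_finrank_span_row]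
  have h1 : Submodule.span ℝ (Set.range M) ≤ Submodule.span ℝ (Set.range w) :=
    Submodule.span_le.mpr (by rintro x ⟨i, rfl⟩; exact h i)
  exact (Submodule.finrank_mono h1).trans (finrank_range_le_card w)

private lemma exists_uv_of_rank_le_one {n : ℕ} (B : Matrix (Fin n) (Fin n) ℝ)
    (hB : B.rank ≤ 1) : ∃ u v : Fin n → ℝ, ∀ i j, B i j = u i * v j := by
  by_cases h0 : ∀ j, Bᵀ j = 0
  · refine ⟨0, 0, fun i j => ?_⟩
    have := congrFun (h0 j) i
    simpa using this
  push_neg at h0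
  obtain ⟨k, hk⟩ := h0
  have hle : Submodule.span ℝ ({Bᵀ k} : Set (Fin n → ℝ)) ≤
      Submodule.span ℝ (Set.range Bᵀ) :=
    Submodule.span_le.mpr (by rintro x rfl; exact Submodule.subset_span ⟨k, rfl⟩)
  have hrank : B.rank = Module.finrank ℝ (Submodule.span ℝ (Set.range Bᵀ)) :=
    Matrix.rank_eq_finrank_span_cols B
  have heq : Submodule.span ℝ ({Bᵀ k} : Set (Fin n → ℝ)) =
      Submodule.span ℝ (Set.range Bᵀ) := by
    apply Submodule.eq_of_le_of_finrank_le hle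
    rw [← hrank]
    calc B.rank ≤ 1 := hB
      _ = Module.finrank ℝ (Submodule.span ℝ ({Bᵀ k} : Set (Fin n → ℝ))) :=
        (finrank_span_singleton hk).symm
  have hmem : ∀ j, Bᵀ j ∈ Submodule.span ℝ ({Bᵀ k} : Set (Fin n → ℝ)) := by
    intro j
    rw [heq]
    exact Submodule.subset_span ⟨j, rfl⟩
  choose c hc using fun j => Submodule.mem_span_singleton.mp (hmem j)
  refine ⟨fun i => B i k, c, fun i j => ?_⟩
  have := congrFun (hc j) i
  simp only [Pi.smul_apply, smul_eq_mul, Matrix.transpose_apply] at this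
  rw [← this]
  ring

theorem rank_one_symmetrization_iff (n : ℕ) (M : Matrix (Fin n) (Fin n) ℝ)
    (hM : M.IsSymm) :
    (∃ B : Matrix (Fin n) (Fin n) ℝ, B.rank ≤ 1 ∧ M = (1/2 : ℝ) • (B + Bᵀ)) ↔
    (M.rank ≤ 2 ∧ ∀ i j, M i i * M j j ≤ (M i j) ^ 2) := by
  constructor
  · rintro ⟨B, hB, rfl⟩
    obtain ⟨u, v, huv⟩ := exists_uv_of_rank_le_one B hB
    have hMij : ∀ i j, ((1/2 : ℝ) • (B + Bᵀ)) i j = 1/2 * (u i * v j + u j * v i) := by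
      intro i j
      simp [huv, Matrix.transpose_apply]
    constructor
    · have := rank_le_card_of_rows_mem ((1/2 : ℝ) • (B + Bᵀ)) ![u, v] (fun i => by
        have hrow : ((1/2 : ℝ) • (B + Bᵀ)) i = (v i / 2) • u + (u i / 2) • v := by
          funext j
          rw [hMij i j]
          simp only [Pi.add_apply, Pi.smul_apply, smul_eq_mul]
          ring
        rw [hrow]
        exact Submodule.add_mem _
          (Submodule.smul_mem _ _ (Submodule.subset_span ⟨0, rfl⟩))
          (Submodule.smul_mem _ _ (Submodule.subset_span ⟨1, rfl⟩)))
      simpa using this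
    · intro i j
      rw [hMij i i, hMij j j, hMij i j]
      nlinarith [sq_nonneg (u i * v j - u j * v i)]
  · rintro ⟨hr, hm⟩
    by_cases h0 : ∀ i, M i = 0
    · refine ⟨0, ?_, ?_⟩
      · have := rank_le_card_of_rows_mem (0 : Matrix (Fin n) (Fin n) ℝ)
          (fun _ : Fin 1 => (0 : Fin n → ℝ)) (fun i => Submodule.zero_mem _)
        simpa using this
      · ext i j
        have := congrFun (h0 i) j
        simp [this]
    push_neg at h0
    obtain ⟨p, hp⟩ := h0
    -- find p q such that every row is a combination of rows p and q
    have hkey : ∃ q, ∀ i, ∃ a b : ℝ, M i = a • M p + b • M q := by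
      by_cases hall : ∀ i, M i ∈ Submodule.span ℝ ({M p} : Set (Fin n → ℝ))
      · refine ⟨p, fun i => ?_⟩
        obtain ⟨a, ha⟩ := Submodule.mem_span_singleton.mp (hall i)
        exact ⟨a, 0, by rw [← ha]; simp⟩
      · push_neg at hall
        obtain ⟨q, hq⟩ := hall
        refine ⟨q, fun i => ?_⟩
        have hli : LinearIndependent ℝ ![M q, M p] := by
          rw [linearIndependent_fin2]
          refine ⟨by simpa using hp, fun a ha => hq ?_⟩
          simp only [Matrix.cons_val_one, Matrix.head_cons, Matrix.cons_val_zero] at ha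
          rw [← ha]
          exact Submodule.smul_mem _ _ (Submodule.subset_span (Set.mem_singleton _))
        have hfr : Module.finrank ℝ (Submodule.span ℝ (Set.range ![M q, M p])) = 2 := by
          rw [finrank_span_eq_card hli]
          simp
        have hle : Submodule.span ℝ (Set.range ![M q, M p]) ≤
            Submodule.span ℝ (Set.range M) := by
          apply Submodule.span_le.mpr
          rintro x ⟨k, rfl⟩
          fin_cases k
          · exact Submodule.subset_span ⟨q, rfl⟩
          · exact Submodule.subset_span ⟨p, rfl⟩
        have heq : Submodule.span ℝ (Set.range ![M q, M p]) =
            Submodule.span ℝ (Set.range M) := by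
          apply Submodule.eq_of_le_of_finrank_le hle
          rw [hfr]
          exact (Matrix.rank_eq_finrank_span_row M).symm.trans_le hr
        have hmem : M i ∈ Submodule.span ℝ (Set.range ![M q, M p]) := by
          rw [heq]; exact Submodule.subset_span ⟨i, rfl⟩
        have hset : Set.range ![M q, M p] = {M q, M p} := by
          ext x
          constructor
          · rintro ⟨k, rfl⟩
            fin_cases k
            · exact Or.inl rfl
            · exact Or.inr rfl
          · rintro (rfl | rfl)
            · exact ⟨0, rfl⟩
            · exact ⟨1, rfl⟩
        rw [hset] at hmem
        obtain ⟨a, b, hab⟩ := Submodule.mem_span_pair.mp hmem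
        exact ⟨b, a, by rw [← hab]; abel⟩
    obtain ⟨q, hrow⟩ := hkey
    choose α β hαβ using hrow
    have hE : ∀ i j, M i j = α i * M p j + β i * M q j := by
      intro i j
      have := congrFun (hαβ i) j
      simpa using this
    have hsym : ∀ i j, M i j = M j i := fun i j => hM.apply j i
    set s := M p p with hs_def
    set t := M p q with ht_def
    set r := M q q with hr_def
    have hst : s * r ≤ t ^ 2 := hm p q
    obtain ⟨a1, a2, b1, b2, h1, h2, h3⟩ :
        ∃ a1 a2 b1 b2 : ℝ, a1 * b1 = s ∧ a2 * b2 = r ∧ a1 * b2 + a2 * b1 = 2 * t := by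
      by_cases hs : s = 0
      · exact ⟨0, 1, 2 * t, r, by simp [hs], by ring, by ring⟩
      · set δ := Real.sqrt (t ^ 2 - s * r) with hδ_def
        have hδ : δ ^ 2 = t ^ 2 - s * r := Real.sq_sqrt (by linarith)
        refine ⟨s, t + δ, 1, (t - δ) / s, by ring, ?_, ?_⟩
        · field_simp
          nlinarith [hδ]
        · field_simp
          ring
    have hMf : ∀ i j, M i j = α i * (α j * s + β j * t) + β i * (α j * t + β j * r) := by
      intro i j
      rw [hE i j]
      have hpj : M p j = α j * s + β j * t := by
        rw [hsym p j, hE j p, ← hsym p q]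
      have hqj : M q j = α j * t + β j * r := by
        rw [hsym q j, hE j q]
      rw [hpj, hqj]
    set u : Fin n → ℝ := fun i => a1 * α i + a2 * β i with hu_def
    set v : Fin n → ℝ := fun i => b1 * α i + b2 * β i with hv_def
    refine ⟨Matrix.of (fun i j => u i * v j), ?_, ?_⟩
    · have := rank_le_card_of_rows_mem (Matrix.of (fun i j => u i * v j)) ![v] (fun i => by
        have : (Matrix.of (fun i j => u i * v j)) i = u i • v := by
          funext j; simp
        rw [this]
        exact Submodule.smul_mem _ _ (Submodule.subset_span ⟨0, rfl⟩))
      simpa using this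
    · ext i j
      simp only [Matrix.smul_apply, Matrix.add_apply, Matrix.transpose_apply, Matrix.of_apply,
        smul_eq_mul]
      rw [hMf i j]
      simp only [hu_def, hv_def]
      linear_combination (-(α i * α j)) * h1 + (-(β i * β j)) * h2 + (-((α i * β j + α j * β i) / 2)) * h3
end

section
/- Let M be an n×n real symmetric matrix. Then M is a Lorentzian matrix of rank at most 2 (i.e., M has nonnegative entries, at most one positive eigenvalue, and rank at most 2) if and only if there exist vectors a, b ∈ ℝⁿ with nonnegative entries such that M = a·bᵀ + b·aᵀ, i.e., M is the Hessian matrix of the quadratic form (∑ᵢ aᵢxᵢ)(∑ᵢ bᵢxᵢ). -/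
open Matrix in
/-- Sign-fixing: a representation `M = abᵀ + baᵀ` of a matrix with nonnegative entries can be
turned into one with nonnegative vectors. -/
private lemma signFix {n : ℕ} (M : Matrix (Fin n) (Fin n) ℝ) (a b : Fin n → ℝ)
    (hpos : ∀ i j, 0 ≤ M i j) (h : ∀ i j, M i j = a i * b j + a j * b i) :
    ∃ a' b' : Fin n → ℝ, (∀ i, 0 ≤ a' i) ∧ (∀ i, 0 ≤ b' i) ∧
      ∀ i j, M i j = a' i * b' j + a' j * b' i := by
  classical
  have hii : ∀ i, 0 ≤ a i * b i := by
    intro i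
    have h1 := hpos i i
    rw [h i i] at h1
    nlinarith
  have hsgn : ∀ i, ¬(0 ≤ a i ∧ 0 ≤ b i) → (a i ≤ 0 ∧ b i ≤ 0) := by
    intro i hni
    have := hii i
    by_cases h1 : 0 ≤ a i <;> by_cases h2 : 0 ≤ b i
    · exact absurd ⟨h1, h2⟩ hni
    · constructor <;> nlinarith [lt_of_not_ge h2]
    · constructor <;> nlinarith [lt_of_not_ge h1]
    · exact ⟨le_of_not_ge h1, le_of_not_ge h2⟩
  refine ⟨fun i => if 0 ≤ a i ∧ 0 ≤ b i then a i else -a i,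
          fun i => if 0 ≤ a i ∧ 0 ≤ b i then b i else -b i, ?_, ?_, ?_⟩
  · intro i
    by_cases hc : 0 ≤ a i ∧ 0 ≤ b i
    · simpa [hc] using hc.1
    · simp only [hc, if_false]
      linarith [(hsgn i hc).1]
  · intro i
    by_cases hc : 0 ≤ a i ∧ 0 ≤ b i
    · simpa [hc] using hc.2
    · simp only [hc, if_false]
      linarith [(hsgn i hc).2]
  · intro i j
    by_cases ci : 0 ≤ a i ∧ 0 ≤ b i <;> by_cases cj : 0 ≤ a j ∧ 0 ≤ b j
    · simp only [if_pos ci, if_pos cj]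
      exact h i j
    · have hj := hsgn j cj
      have hle : M i j ≤ 0 := by
        rw [h i j]
        nlinarith [ci.1, ci.2, hj.1, hj.2]
      have h0 : M i j = 0 := le_antisymm hle (hpos i j)
      simp only [if_pos ci, if_neg cj]
      rw [h0]
      rw [h i j] at h0
      ring_nf
      ring_nf at h0
      linarith
    · have hi := hsgn i ci
      have hle : M i j ≤ 0 := by
        rw [h i j]
        nlinarith [cj.1, cj.2, hi.1, hi.2]
      have h0 : M i j = 0 := le_antisymm hle (hpos i j)
      simp only [if_neg ci, if_pos cj]
      rw [h0]
      rw [h i j] at h0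
      ring_nf
      ring_nf at h0
      linarith
    · simp only [if_neg ci, if_neg cj]
      rw [h i j]; ring

/-- A Lorentzian matrix: real symmetric with nonnegative entries and at most one
positive eigenvalue (counted with multiplicity). -/
def IsLorentzian {n : ℕ} (M : Matrix (Fin n) (Fin n) ℝ) : Prop :=
  M.IsSymm ∧ (∀ i j, 0 ≤ M i j) ∧
    ∀ (hM : M.IsHermitian),
      (Finset.univ.filter fun i => 0 < hM.eigenvalues i).card ≤ 1

open Matrix in
theorem lorentzian_rank_two_iff (n : ℕ) (M : Matrix (Fin n) (Fin n) ℝ)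
    (hM : M.IsSymm) :
    (IsLorentzian M ∧ M.rank ≤ 2) ↔
    (∃ a b : Fin n → ℝ, (∀ i, 0 ≤ a i) ∧ (∀ i, 0 ≤ b i) ∧
      ∀ i j, M i j = a i * b j + a j * b i) := by
  have hH : M.IsHermitian := by
    rwa [Matrix.IsHermitian, Matrix.conjTranspose, Matrix.IsSymm] at *
  -- orthonormality of the eigenvector basis, in dot-product form
  have hdot : ∀ k l, ⇑(hH.eigenvectorBasis k) ⬝ᵥ ⇑(hH.eigenvectorBasis l)
      = if k = l then (1:ℝ) else 0 := by
    intro k l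
    have := orthonormal_iff_ite.mp hH.eigenvectorBasis.orthonormal k l
    rw [PiLp.inner_apply] at this
    simpa [dotProduct, RCLike.inner_apply, starRingEnd_apply, mul_comm] using this
  -- entrywise spectral theorem
  have hspec : ∀ i j, M i j = ∑ k, hH.eigenvalues k * hH.eigenvectorBasis k i *
      hH.eigenvectorBasis k j := by
    intro i j
    conv_lhs => rw [hH.spectral_theorem]
    simp [Matrix.mul_apply, Matrix.diagonal, Finset.sum_mul, mul_comm, mul_assoc, mul_left_comm]
  constructor
  · -- forward direction
    rintro ⟨⟨-, hpos, hcount⟩, hrank⟩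
    have hcard1 : (Finset.univ.filter fun i => 0 < hH.eigenvalues i).card ≤ 1 := hcount hH
    have hcard2 : (Finset.univ.filter fun i => hH.eigenvalues i ≠ 0).card ≤ 2 := by
      classical
      have h' := hH.rank_eq_card_non_zero_eigs
      rw [Fintype.card_subtype] at h'
      exact h' ▸ hrank
    classical
    by_cases hPe : (Finset.univ.filter fun k => 0 < hH.eigenvalues k) = ∅
    · -- all eigenvalues vanish
      have hle : ∀ k, hH.eigenvalues k ≤ 0 := by
        intro k
        by_contra hk
        push_neg at hk
        have hmem : k ∈ Finset.univ.filter fun k => 0 < hH.eigenvalues k := by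
          simp [hk]
        rw [hPe] at hmem
        exact absurd hmem (Finset.notMem_empty k)
      have htrace : ∑ i, M i i = ∑ k, hH.eigenvalues k := by
        rw [Finset.sum_congr rfl (fun i _ => hspec i i), Finset.sum_comm]
        apply Finset.sum_congr rfl
        intro k _
        have hk : ∑ i, hH.eigenvectorBasis k i * hH.eigenvectorBasis k i = (1:ℝ) := by
          have h' := orthonormal_iff_ite.mp hH.eigenvectorBasis.orthonormal k k
          rw [PiLp.inner_apply] at h'
          simpa [RCLike.inner_apply, starRingEnd_apply, ← sq] using h'
        simp_rw [mul_assoc, ← Finset.mul_sum]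
        rw [hk, mul_one]
      have hsum0 : ∑ k, hH.eigenvalues k = 0 :=
        le_antisymm (Finset.sum_nonpos fun k _ => hle k)
          (htrace ▸ Finset.sum_nonneg fun i _ => hpos i i)
      have hz : ∀ k, hH.eigenvalues k = 0 := fun k =>
        (Finset.sum_eq_zero_iff_of_nonpos fun k _ => hle k).mp hsum0 k (Finset.mem_univ k)
      refine ⟨0, 0, fun i => le_refl 0, fun i => le_refl 0, fun i j => ?_⟩
      rw [hspec i j]
      simp [hz]
    · obtain ⟨p, hp⟩ := Finset.nonempty_of_ne_empty hPe
      have hlp : 0 < hH.eigenvalues p := (Finset.mem_filter.mp hp).2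
      have hPonly : ∀ k, 0 < hH.eigenvalues k → k = p := by
        intro k hk
        exact Finset.card_le_one.mp hcard1 k (by simp [hk]) p hp
      have hzero : ∀ k, k ≠ p → ¬ hH.eigenvalues k < 0 → hH.eigenvalues k = 0 := by
        intro k hkp hkn
        refine le_antisymm (le_of_not_gt fun h' => hkp (hPonly k h')) (le_of_not_gt hkn)
      by_cases hNe : (Finset.univ.filter fun k => hH.eigenvalues k < 0) = ∅
      · -- single positive eigenvalue
        have hz : ∀ k, k ≠ p → hH.eigenvalues k = 0 := by
          intro k hk
          refine hzero k hk fun h' => ?_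
          have hmem : k ∈ Finset.univ.filter fun k => hH.eigenvalues k < 0 := by simp [h']
          rw [hNe] at hmem
          exact absurd hmem (Finset.notMem_empty k)
        have hMij : ∀ i j, M i j
            = hH.eigenvalues p * hH.eigenvectorBasis p i * hH.eigenvectorBasis p j := by
          intro i j
          rw [hspec i j, Finset.sum_eq_single p]
          · intro k _ hk
            rw [hz k hk]
            ring
          · intro hk
            exact absurd (Finset.mem_univ p) hk
        set s := Real.sqrt (hH.eigenvalues p / 2) with hsdef
        have hs : s * s = hH.eigenvalues p / 2 := Real.mul_self_sqrt (by linarith)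
        have hrep : ∀ i j, M i j = (s * hH.eigenvectorBasis p i) * (s * hH.eigenvectorBasis p j)
            + (s * hH.eigenvectorBasis p j) * (s * hH.eigenvectorBasis p i) := by
          intro i j
          rw [hMij i j]
          linear_combination (-2 * (hH.eigenvectorBasis p i : ℝ) * (hH.eigenvectorBasis p j : ℝ)) * hs
        exact signFix M (fun i => s * hH.eigenvectorBasis p i)
          (fun i => s * hH.eigenvectorBasis p i) hpos hrep
      · obtain ⟨q, hq⟩ := Finset.nonempty_of_ne_empty hNe
        have hlq : hH.eigenvalues q < 0 := (Finset.mem_filter.mp hq).2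
        have hqp : q ≠ p := by
          intro e
          rw [e] at hlq
          linarith
        have hNonly : ∀ k, hH.eigenvalues k < 0 → k = q := by
          intro k hk
          by_contra hkq
          have hkp : k ≠ p := by
            intro e
            rw [e] at hk
            linarith
          have hsub : ({p, q, k} : Finset (Fin n)) ⊆
              Finset.univ.filter fun i => hH.eigenvalues i ≠ 0 := by
            intro x hx
            simp only [Finset.mem_insert, Finset.mem_singleton] at hx
            rcases hx with rfl | rfl | rfl
            · simp [ne_of_gt hlp]
            · simp [ne_of_lt hlq]
            · simp [ne_of_lt hk]
          have h3 : ({p, q, k} : Finset (Fin n)).card = 3 :=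
            Finset.card_eq_three.mpr ⟨p, q, k, Ne.symm hqp, Ne.symm hkp, Ne.symm hkq, rfl⟩
          have := (Finset.card_le_card hsub).trans hcard2
          omega
        have hz : ∀ k, k ≠ p → k ≠ q → hH.eigenvalues k = 0 := by
          intro k h1 h2
          exact hzero k h1 fun hk => h2 (hNonly k hk)
        have hMij : ∀ i j, M i j
            = hH.eigenvalues p * hH.eigenvectorBasis p i * hH.eigenvectorBasis p j
            + hH.eigenvalues q * hH.eigenvectorBasis q i * hH.eigenvectorBasis q j := by
          intro i j
          rw [hspec i j,
            ← Finset.sum_subset (Finset.subset_univ ({p, q} : Finset (Fin n)))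
              (fun k _ hk => by
                simp only [Finset.mem_insert, Finset.mem_singleton, not_or] at hk
                rw [hz k hk.1 hk.2]
                ring),
            Finset.sum_pair (Ne.symm hqp)]
        set s := Real.sqrt (hH.eigenvalues p / 2) with hsdef
        set t := Real.sqrt (-hH.eigenvalues q / 2) with htdef
        have hs : s * s = hH.eigenvalues p / 2 := Real.mul_self_sqrt (by linarith)
        have ht : t * t = -hH.eigenvalues q / 2 := Real.mul_self_sqrt (by linarith)
        have hrep : ∀ i j, M i j =
            (s * hH.eigenvectorBasis p i + t * hH.eigenvectorBasis q i) *
              (s * hH.eigenvectorBasis p j - t * hH.eigenvectorBasis q j)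
            + (s * hH.eigenvectorBasis p j + t * hH.eigenvectorBasis q j) *
              (s * hH.eigenvectorBasis p i - t * hH.eigenvectorBasis q i) := by
          intro i j
          rw [hMij i j]
          linear_combination
            (-2 * (hH.eigenvectorBasis p i : ℝ) * (hH.eigenvectorBasis p j : ℝ)) * hs
            + (2 * (hH.eigenvectorBasis q i : ℝ) * (hH.eigenvectorBasis q j : ℝ)) * ht
        exact signFix M
          (fun i => s * hH.eigenvectorBasis p i + t * hH.eigenvectorBasis q i)
          (fun i => s * hH.eigenvectorBasis p i - t * hH.eigenvectorBasis q i) hpos hrep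
  · -- backward direction
    rintro ⟨a, b, ha, hb, h⟩
    refine ⟨⟨hM, ?_, ?_⟩, ?_⟩
    · intro i j
      rw [h i j]
      have := ha i; have := ha j; have := hb i; have := hb j
      positivity
    · intro hH'
      by_contra hc
      push_neg at hc
      obtain ⟨i, hi, j, hj, hij⟩ := Finset.one_lt_card.mp hc
      rw [Finset.mem_filter] at hi hj
      have hli : 0 < hH'.eigenvalues i := hi.2
      have hlj : 0 < hH'.eigenvalues j := hj.2
      set u : Fin n → ℝ := ⇑(hH'.eigenvectorBasis i) with hu
      set w : Fin n → ℝ := ⇑(hH'.eigenvectorBasis j) with hw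
      have hdot' : ∀ k l, ⇑(hH'.eigenvectorBasis k) ⬝ᵥ ⇑(hH'.eigenvectorBasis l)
          = if k = l then (1:ℝ) else 0 := by
        intro k l
        have := orthonormal_iff_ite.mp hH'.eigenvectorBasis.orthonormal k l
        rw [PiLp.inner_apply] at this
        simpa [dotProduct, RCLike.inner_apply, starRingEnd_apply, mul_comm] using this
      have huu : u ⬝ᵥ u = 1 := by simpa using hdot' i i
      have hww : w ⬝ᵥ w = 1 := by simpa using hdot' j j
      have huw : u ⬝ᵥ w = 0 := by simpa [hij] using hdot' i j
      have hwu : w ⬝ᵥ u = 0 := by simpa [Ne.symm hij] using hdot' j i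
      have quad : ∀ x : Fin n → ℝ, x ⬝ᵥ (M *ᵥ x) = 2 * (a ⬝ᵥ x) * (b ⬝ᵥ x) := by
        intro x
        have hmv : M *ᵥ x = (b ⬝ᵥ x) • a + (a ⬝ᵥ x) • b := by
          ext i'
          simp only [Matrix.mulVec, dotProduct, Pi.add_apply, Pi.smul_apply, smul_eq_mul]
          simp_rw [h]
          rw [Finset.sum_congr rfl (fun j' _ => (add_mul (a i' * b j') (a j' * b i') (x j'))),
            Finset.sum_add_distrib, Finset.sum_mul, Finset.sum_mul]
          congr 1 <;> apply Finset.sum_congr rfl <;> intros <;> ring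
        rw [hmv, dotProduct_add, dotProduct_smul, dotProduct_smul, dotProduct_comm x a,
          dotProduct_comm x b]
        simp only [smul_eq_mul]
        ring
      have key : ∀ c d : ℝ, (c • u + d • w) ⬝ᵥ (M *ᵥ (c • u + d • w))
          = c^2 * hH'.eigenvalues i + d^2 * hH'.eigenvalues j := by
        intro c d
        have h1 : M *ᵥ u = hH'.eigenvalues i • u := hH'.mulVec_eigenvectorBasis i
        have h2 : M *ᵥ w = hH'.eigenvalues j • w := hH'.mulVec_eigenvectorBasis j
        rw [mulVec_add, mulVec_smul, mulVec_smul, h1, h2, dotProduct_add, add_dotProduct,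
          add_dotProduct]
        simp only [dotProduct_smul, smul_dotProduct, smul_eq_mul, huu, hww, huw, hwu]
        ring
      have hau : a ⬝ᵥ u = 0 ∧ a ⬝ᵥ w = 0 := by
        have hax : a ⬝ᵥ ((a ⬝ᵥ w) • u + (-(a ⬝ᵥ u)) • w) = 0 := by
          rw [dotProduct_add, dotProduct_smul, dotProduct_smul]
          simp only [smul_eq_mul]
          ring
        have h0 := key (a ⬝ᵥ w) (-(a ⬝ᵥ u))
        rw [quad, hax, mul_zero, zero_mul, neg_sq] at h0
        have hnn1 : 0 ≤ (a ⬝ᵥ w)^2 * hH'.eigenvalues i := mul_nonneg (sq_nonneg _) hli.le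
        have hnn2 : 0 ≤ (a ⬝ᵥ u)^2 * hH'.eigenvalues j := mul_nonneg (sq_nonneg _) hlj.le
        have hu0 : (a ⬝ᵥ u)^2 * hH'.eigenvalues j = 0 := by linarith
        have hw0 : (a ⬝ᵥ w)^2 * hH'.eigenvalues i = 0 := by linarith
        constructor
        · exact sq_eq_zero_iff.mp ((mul_eq_zero.mp hu0).resolve_right (ne_of_gt hlj))
        · exact sq_eq_zero_iff.mp ((mul_eq_zero.mp hw0).resolve_right (ne_of_gt hli))
      have hfin := key 1 0
      rw [quad] at hfin
      simp only [dotProduct_add, dotProduct_smul, smul_eq_mul, hau.1, hau.2, mul_zero, zero_mul,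
        add_zero, one_pow, one_mul, zero_pow, zero_add] at hfin
      nlinarith
    · -- rank ≤ 2
      have hrange : LinearMap.range M.mulVecLin ≤
          Submodule.span ℝ (({a, b} : Finset (Fin n → ℝ)) : Set (Fin n → ℝ)) := by
        rintro _ ⟨x, rfl⟩
        have hmv : M.mulVecLin x = (b ⬝ᵥ x) • a + (a ⬝ᵥ x) • b := by
          ext i
          simp only [mulVecLin_apply, Matrix.mulVec, dotProduct, Pi.add_apply,
            Pi.smul_apply, smul_eq_mul]
          simp_rw [h]
          rw [Finset.sum_congr rfl (fun j _ => (add_mul (a i * b j) (a j * b i) (x j))),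
            Finset.sum_add_distrib, Finset.sum_mul, Finset.sum_mul]
          congr 1 <;> apply Finset.sum_congr rfl <;> intros <;> ring
        rw [hmv]
        exact Submodule.add_mem _
          (Submodule.smul_mem _ _ (Submodule.subset_span (by simp)))
          (Submodule.smul_mem _ _ (Submodule.subset_span (by simp)))
      calc M.rank = Module.finrank ℝ (LinearMap.range M.mulVecLin) := rfl
        _ ≤ Module.finrank ℝ (Submodule.span ℝ (({a, b} : Finset (Fin n → ℝ)) :
              Set (Fin n → ℝ))) := Submodule.finrank_mono hrange
        _ ≤ ({a, b} : Finset (Fin n → ℝ)).card := by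
            simpa [Set.finrank] using
              finrank_span_finset_le_card (R := ℝ) ({a, b} : Finset (Fin n → ℝ))
        _ ≤ 2 := Finset.card_insert_le _ _ |>.trans (by simp)
end
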